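/- Negative answer to Problem 2: the operation ∘ on M satisfies the Moufang identity (x∘y)∘(z∘x) = (x∘(y∘z))∘x, the smallest subset of M containing {0,a,b,c,d} and closed under ∘ is all of M, every triple of elements from {a,b,c,d} associates ((a∘b)∘c = a∘(b∘c), (a∘b)∘d = a∘(b∘d), (a∘c)∘d = a∘(c∘d), (b∘c)∘d = b∘(c∘d)), and yet there exist x, y, z in M with (x∘y)∘z ≠ x∘(y∘z). -/
import Mathlib


/-- The polynomial map `f` defining the loop multiplication on `(ZMod 3)^19`.
Indices are shifted by one: `x 0` corresponds to `x₁`, ..., `x 18` to `x₁₉`. -/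
def f (x y : Fin 19 → ZMod 3) : Fin 19 → ZMod 3 :=
  ![0, 0, 0, 0,
    -(x 1 * y 0),
    -(x 2 * y 0),
    -(x 3 * y 0),
    -(x 2 * y 1),
    -(x 3 * y 1),
    -(x 3 * y 2),
    -(x 1 * x 2 * y 0) - x 1 * y 0 * y 2 + x 4 * y 2 - x 7 * y 0,
    -(x 1 * x 3 * y 0) - x 1 * y 0 * y 3 + x 4 * y 3 - x 8 * y 0,
    -(x 2 * y 0 * y 1) + x 5 * y 1 + x 7 * y 0,
    -(x 2 * x 3 * y 0) - x 2 * y 0 * y 3 + x 5 * y 3 - x 9 * y 0,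
    -(x 3 * y 0 * y 1) + x 6 * y 1 + x 8 * y 0,
    -(x 3 * y 0 * y 2) + x 6 * y 2 + x 9 * y 0,
    -(x 2 * x 3 * y 1) - x 2 * y 1 * y 3 + x 7 * y 3 - x 9 * y 1,
    -(x 3 * y 1 * y 2) + x 8 * y 2 + x 9 * y 1,
    -(x 0 * x 1 * x 3 * y 2) + x 0 * x 1 * y 2 * y 3 + x 0 * x 2 * y 1 * y 3
      + x 0 * x 3 * y 1 * y 2 - x 0 * y 1 * y 2 * y 3
      - x 1 * x 2 * x 3 * y 0 + x 1 * x 2 * y 0 * y 3 + x 1 * x 3 * y 0 * y 2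
      + x 2 * x 3 * y 0 * y 1 - x 2 * y 0 * y 1 * y 3
      + x 0 * x 7 * y 3 - x 0 * x 8 * y 2 + x 0 * x 9 * y 1
      - x 0 * y 1 * y 9 + x 0 * y 2 * y 8 - x 0 * y 3 * y 7
      - x 1 * x 5 * y 3 + x 1 * x 6 * y 2 - x 1 * x 9 * y 0
      + x 1 * y 0 * y 9 - x 1 * y 2 * y 6 + x 1 * y 3 * y 5
      + x 2 * x 4 * y 3 - x 2 * x 6 * y 1 + x 2 * x 8 * y 0
      - x 2 * y 0 * y 8 + x 2 * y 1 * y 6 - x 2 * y 3 * y 4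
      - x 3 * x 4 * y 2 + x 3 * x 5 * y 1 - x 3 * x 7 * y 0
      + x 3 * y 0 * y 7 - x 3 * y 1 * y 5 + x 3 * y 2 * y 4]

/-- The loop multiplication `x ∘ y = x + y + f(x,y)` on `M = (ZMod 3)^19`. -/
def circ (x y : Fin 19 → ZMod 3) : Fin 19 → ZMod 3 := x + y + f x y

/-- The `i`-th standard basis vector of `(ZMod 3)^19`. -/
def e (i : Fin 19) : Fin 19 → ZMod 3 := fun j => if j = i then 1 else 0

/-- The four generators `a = e₁`, `b = e₂`, `c = e₃`, `d = e₄`. -/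
def a : Fin 19 → ZMod 3 := e 0
def b : Fin 19 → ZMod 3 := e 1
def c : Fin 19 → ZMod 3 := e 2
def d : Fin 19 → ZMod 3 := e 3

section Aux

lemma circ_apply (x y : Fin 19 → ZMod 3) (j : Fin 19) :
    circ x y j = x j + y j + f x y j := rfl

lemma fA0 (x y : Fin 19 → ZMod 3) : f x y 0 =
    0 := rfl

lemma fA1 (x y : Fin 19 → ZMod 3) : f x y 1 =
    0 := rfl

lemma fA2 (x y : Fin 19 → ZMod 3) : f x y 2 =
    0 := rfl

lemma fA3 (x y : Fin 19 → ZMod 3) : f x y 3 =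
    0 := rfl

lemma fA4 (x y : Fin 19 → ZMod 3) : f x y 4 =
    -(x 1 * y 0) := rfl

lemma fA5 (x y : Fin 19 → ZMod 3) : f x y 5 =
    -(x 2 * y 0) := rfl

lemma fA6 (x y : Fin 19 → ZMod 3) : f x y 6 =
    -(x 3 * y 0) := rfl

lemma fA7 (x y : Fin 19 → ZMod 3) : f x y 7 =
    -(x 2 * y 1) := rfl

lemma fA8 (x y : Fin 19 → ZMod 3) : f x y 8 =
    -(x 3 * y 1) := rfl

lemma fA9 (x y : Fin 19 → ZMod 3) : f x y 9 =
    -(x 3 * y 2) := rfl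

lemma fA10 (x y : Fin 19 → ZMod 3) : f x y 10 =
    -(x 1 * x 2 * y 0) - x 1 * y 0 * y 2 + x 4 * y 2 - x 7 * y 0 := rfl

lemma fA11 (x y : Fin 19 → ZMod 3) : f x y 11 =
    -(x 1 * x 3 * y 0) - x 1 * y 0 * y 3 + x 4 * y 3 - x 8 * y 0 := rfl

lemma fA12 (x y : Fin 19 → ZMod 3) : f x y 12 =
    -(x 2 * y 0 * y 1) + x 5 * y 1 + x 7 * y 0 := rfl

lemma fA13 (x y : Fin 19 → ZMod 3) : f x y 13 =
    -(x 2 * x 3 * y 0) - x 2 * y 0 * y 3 + x 5 * y 3 - x 9 * y 0 := rfl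

lemma fA14 (x y : Fin 19 → ZMod 3) : f x y 14 =
    -(x 3 * y 0 * y 1) + x 6 * y 1 + x 8 * y 0 := rfl

lemma fA15 (x y : Fin 19 → ZMod 3) : f x y 15 =
    -(x 3 * y 0 * y 2) + x 6 * y 2 + x 9 * y 0 := rfl

lemma fA16 (x y : Fin 19 → ZMod 3) : f x y 16 =
    -(x 2 * x 3 * y 1) - x 2 * y 1 * y 3 + x 7 * y 3 - x 9 * y 1 := rfl

lemma fA17 (x y : Fin 19 → ZMod 3) : f x y 17 =
    -(x 3 * y 1 * y 2) + x 8 * y 2 + x 9 * y 1 := rfl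

lemma fA18 (x y : Fin 19 → ZMod 3) : f x y 18 =
    -(x 0 * x 1 * x 3 * y 2) + x 0 * x 1 * y 2 * y 3 + x 0 * x 2 * y 1 * y 3 + x 0 * x 3 * y 1 * y 2 - x 0 * y 1 * y 2 * y 3 - x 1 * x 2 * x 3 * y 0 + x 1 * x 2 * y 0 * y 3 + x 1 * x 3 * y 0 * y 2 + x 2 * x 3 * y 0 * y 1 - x 2 * y 0 * y 1 * y 3 + x 0 * x 7 * y 3 - x 0 * x 8 * y 2 + x 0 * x 9 * y 1 - x 0 * y 1 * y 9 + x 0 * y 2 * y 8 - x 0 * y 3 * y 7 - x 1 * x 5 * y 3 + x 1 * x 6 * y 2 - x 1 * x 9 * y 0 + x 1 * y 0 * y 9 - x 1 * y 2 * y 6 + x 1 * y 3 * y 5 + x 2 * x 4 * y 3 - x 2 * x 6 * y 1 + x 2 * x 8 * y 0 - x 2 * y 0 * y 8 + x 2 * y 1 * y 6 - x 2 * y 3 * y 4 - x 3 * x 4 * y 2 + x 3 * x 5 * y 1 - x 3 * x 7 * y 0 + x 3 * y 0 * y 7 - x 3 * y 1 * y 5 + x 3 * y 2 * y 4 := rf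l

lemma vec_ext (u v : Fin 19 → ZMod 3)
    (h0 : u 0 = v 0) (h1 : u 1 = v 1) (h2 : u 2 = v 2) (h3 : u 3 = v 3) (h4 : u 4 = v 4) (h5 : u 5 = v 5) (h6 : u 6 = v 6) (h7 : u 7 = v 7) (h8 : u 8 = v 8) (h9 : u 9 = v 9) (h10 : u 10 = v 10) (h11 : u 11 = v 11) (h12 : u 12 = v 12) (h13 : u 13 = v 13) (h14 : u 14 = v 14) (h15 : u 15 = v 15) (h16 : u 16 = v 16) (h17 : u 17 = v 17) (h18 : u 18 = v 18) : u = v := by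
  funext j
  obtain ⟨jv, hj⟩ := j
  interval_cases jv
  exacts [h0, h1, h2, h3, h4, h5, h6, h7, h8, h9, h10, h11, h12, h13, h14, h15, h16, h17, h18]

lemma e_self (i : Fin 19) : e i i = 1 := by simp [e]

lemma e_ne (i j : Fin 19) (h : j ≠ i) : e i j = 0 := by simp [e, h]

lemma f_low (x y : Fin 19 → ZMod 3) (j : Fin 19) (hj : (j : ℕ) < 4) :
    circ x y j = x j + y j := by
  have c0 : circ x y 0 = x 0 + y 0 := by simp only [circ_apply, fA0, add_zero]
  have c1 : circ x y 1 = x 1 + y 1 := by simp only [circ_apply, fA1, add_zero]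
  have c2 : circ x y 2 = x 2 + y 2 := by simp only [circ_apply, fA2, add_zero]
  have c3 : circ x y 3 = x 3 + y 3 := by simp only [circ_apply, fA3, add_zero]
  obtain ⟨jv, hjv⟩ := j
  interval_cases jv
  exacts [c0, c1, c2, c3]

lemma f_mid (x y : Fin 19 → ZMod 3) (hy : ∀ j : Fin 19, (j : ℕ) < 4 → y j = 0)
    (j : Fin 19) (hj : (j : ℕ) < 18) : circ x y j = x j + y j := by
  have hy0 : y 0 = 0 := hy 0 (by decide)
  have hy1 : y 1 = 0 := hy 1 (by decide)
  have hy2 : y 2 = 0 := hy 2 (by decide)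
  have hy3 : y 3 = 0 := hy 3 (by decide)
  have c0 : circ x y 0 = x 0 + y 0 := by
    simp only [circ_apply, fA0, hy0, hy1, hy2, hy3]; ring
  have c1 : circ x y 1 = x 1 + y 1 := by
    simp only [circ_apply, fA1, hy0, hy1, hy2, hy3]; ring
  have c2 : circ x y 2 = x 2 + y 2 := by
    simp only [circ_apply, fA2, hy0, hy1, hy2, hy3]; ring
  have c3 : circ x y 3 = x 3 + y 3 := by
    simp only [circ_apply, fA3, hy0, hy1, hy2, hy3]; ring
  have c4 : circ x y 4 = x 4 + y 4 := by
    simp only [circ_apply, fA4, hy0, hy1, hy2, hy3]; ring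
  have c5 : circ x y 5 = x 5 + y 5 := by
    simp only [circ_apply, fA5, hy0, hy1, hy2, hy3]; ring
  have c6 : circ x y 6 = x 6 + y 6 := by
    simp only [circ_apply, fA6, hy0, hy1, hy2, hy3]; ring
  have c7 : circ x y 7 = x 7 + y 7 := by
    simp only [circ_apply, fA7, hy0, hy1, hy2, hy3]; ring
  have c8 : circ x y 8 = x 8 + y 8 := by
    simp only [circ_apply, fA8, hy0, hy1, hy2, hy3]; ring
  have c9 : circ x y 9 = x 9 + y 9 := by
    simp only [circ_apply, fA9, hy0, hy1, hy2, hy3]; ring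
  have c10 : circ x y 10 = x 10 + y 10 := by
    simp only [circ_apply, fA10, hy0, hy1, hy2, hy3]; ring
  have c11 : circ x y 11 = x 11 + y 11 := by
    simp only [circ_apply, fA11, hy0, hy1, hy2, hy3]; ring
  have c12 : circ x y 12 = x 12 + y 12 := by
    simp only [circ_apply, fA12, hy0, hy1, hy2, hy3]; ring
  have c13 : circ x y 13 = x 13 + y 13 := by
    simp only [circ_apply, fA13, hy0, hy1, hy2, hy3]; ring
  have c14 : circ x y 14 = x 14 + y 14 := by
    simp only [circ_apply, fA14, hy0, hy1, hy2, hy3]; ring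
  have c15 : circ x y 15 = x 15 + y 15 := by
    simp only [circ_apply, fA15, hy0, hy1, hy2, hy3]; ring
  have c16 : circ x y 16 = x 16 + y 16 := by
    simp only [circ_apply, fA16, hy0, hy1, hy2, hy3]; ring
  have c17 : circ x y 17 = x 17 + y 17 := by
    simp only [circ_apply, fA17, hy0, hy1, hy2, hy3]; ring
  obtain ⟨jv, hjv⟩ := j
  interval_cases jv
  exacts [c0, c1, c2, c3, c4, c5, c6, c7, c8, c9, c10, c11, c12, c13, c14, c15, c16, c17]

lemma f_top (x y : Fin 19 → ZMod 3) (hy : ∀ j : Fin 19, (j : ℕ) < 10 → y j = 0) :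
    circ x y = x + y := by
  have hy0 : y 0 = 0 := hy 0 (by decide)
  have hy1 : y 1 = 0 := hy 1 (by decide)
  have hy2 : y 2 = 0 := hy 2 (by decide)
  have hy3 : y 3 = 0 := hy 3 (by decide)
  have hy4 : y 4 = 0 := hy 4 (by decide)
  have hy5 : y 5 = 0 := hy 5 (by decide)
  have hy6 : y 6 = 0 := hy 6 (by decide)
  have hy7 : y 7 = 0 := hy 7 (by decide)
  have hy8 : y 8 = 0 := hy 8 (by decide)
  have hy9 : y 9 = 0 := hy 9 (by decide)
  have c0 : circ x y 0 = x 0 + y 0 := by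
    simp only [circ_apply, fA0, hy0, hy1, hy2, hy3, hy4, hy5, hy6, hy7, hy8, hy9]; ring
  have c1 : circ x y 1 = x 1 + y 1 := by
    simp only [circ_apply, fA1, hy0, hy1, hy2, hy3, hy4, hy5, hy6, hy7, hy8, hy9]; ring
  have c2 : circ x y 2 = x 2 + y 2 := by
    simp only [circ_apply, fA2, hy0, hy1, hy2, hy3, hy4, hy5, hy6, hy7, hy8, hy9]; ring
  have c3 : circ x y 3 = x 3 + y 3 := by
    simp only [circ_apply, fA3, hy0, hy1, hy2, hy3, hy4, hy5, hy6, hy7, hy8, hy9]; ring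
  have c4 : circ x y 4 = x 4 + y 4 := by
    simp only [circ_apply, fA4, hy0, hy1, hy2, hy3, hy4, hy5, hy6, hy7, hy8, hy9]; ring
  have c5 : circ x y 5 = x 5 + y 5 := by
    simp only [circ_apply, fA5, hy0, hy1, hy2, hy3, hy4, hy5, hy6, hy7, hy8, hy9]; ring
  have c6 : circ x y 6 = x 6 + y 6 := by
    simp only [circ_apply, fA6, hy0, hy1, hy2, hy3, hy4, hy5, hy6, hy7, hy8, hy9]; ring
  have c7 : circ x y 7 = x 7 + y 7 := by
    simp only [circ_apply, fA7, hy0, hy1, hy2, hy3, hy4, hy5, hy6, hy7, hy8, hy9]; ring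
  have c8 : circ x y 8 = x 8 + y 8 := by
    simp only [circ_apply, fA8, hy0, hy1, hy2, hy3, hy4, hy5, hy6, hy7, hy8, hy9]; ring
  have c9 : circ x y 9 = x 9 + y 9 := by
    simp only [circ_apply, fA9, hy0, hy1, hy2, hy3, hy4, hy5, hy6, hy7, hy8, hy9]; ring
  have c10 : circ x y 10 = x 10 + y 10 := by
    simp only [circ_apply, fA10, hy0, hy1, hy2, hy3, hy4, hy5, hy6, hy7, hy8, hy9]; ring
  have c11 : circ x y 11 = x 11 + y 11 := by
    simp only [circ_apply, fA11, hy0, hy1, hy2, hy3, hy4, hy5, hy6, hy7, hy8, hy9]; ring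
  have c12 : circ x y 12 = x 12 + y 12 := by
    simp only [circ_apply, fA12, hy0, hy1, hy2, hy3, hy4, hy5, hy6, hy7, hy8, hy9]; ring
  have c13 : circ x y 13 = x 13 + y 13 := by
    simp only [circ_apply, fA13, hy0, hy1, hy2, hy3, hy4, hy5, hy6, hy7, hy8, hy9]; ring
  have c14 : circ x y 14 = x 14 + y 14 := by
    simp only [circ_apply, fA14, hy0, hy1, hy2, hy3, hy4, hy5, hy6, hy7, hy8, hy9]; ring
  have c15 : circ x y 15 = x 15 + y 15 := by
    simp only [circ_apply, fA15, hy0, hy1, hy2, hy3, hy4, hy5, hy6, hy7, hy8, hy9]; ring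
  have c16 : circ x y 16 = x 16 + y 16 := by
    simp only [circ_apply, fA16, hy0, hy1, hy2, hy3, hy4, hy5, hy6, hy7, hy8, hy9]; ring
  have c17 : circ x y 17 = x 17 + y 17 := by
    simp only [circ_apply, fA17, hy0, hy1, hy2, hy3, hy4, hy5, hy6, hy7, hy8, hy9]; ring
  have c18 : circ x y 18 = x 18 + y 18 := by
    simp only [circ_apply, fA18, hy0, hy1, hy2, hy3, hy4, hy5, hy6, hy7, hy8, hy9]; ring
  funext j
  rw [Pi.add_apply]
  obtain ⟨jv, hjv⟩ := j
  interval_cases jv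
  exacts [c0, c1, c2, c3, c4, c5, c6, c7, c8, c9, c10, c11, c12, c13, c14, c15, c16, c17, c18]

set_option maxHeartbeats 2000000 in
lemma moufang (x y z : Fin 19 → ZMod 3) :
    circ (circ x y) (circ z x) = circ (circ x (circ y z)) x := by
  have h3 : (3 : ZMod 3) = 0 := rfl
  refine vec_ext _ _ ?_ ?_ ?_ ?_ ?_ ?_ ?_ ?_ ?_ ?_ ?_ ?_ ?_ ?_ ?_ ?_ ?_ ?_ ?_
  · simp only [circ_apply, fA0, fA1, fA2, fA3, fA4, fA5, fA6, fA7, fA8, fA9, fA10, fA11, fA12, fA13, fA14, fA15, fA16, fA17, fA18]; ring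
  · simp only [circ_apply, fA0, fA1, fA2, fA3, fA4, fA5, fA6, fA7, fA8, fA9, fA10, fA11, fA12, fA13, fA14, fA15, fA16, fA17, fA18]; ring
  · simp only [circ_apply, fA0, fA1, fA2, fA3, fA4, fA5, fA6, fA7, fA8, fA9, fA10, fA11, fA12, fA13, fA14, fA15, fA16, fA17, fA18]; ring
  · simp only [circ_apply, fA0, fA1, fA2, fA3, fA4, fA5, fA6, fA7, fA8, fA9, fA10, fA11, fA12, fA13, fA14, fA15, fA16, fA17, fA18]; ring
  · simp only [circ_apply, fA0, fA1, fA2, fA3, fA4, fA5, fA6, fA7, fA8, fA9, fA10, fA11, fA12, fA13, fA14, fA15, fA16, fA17, fA18]; ring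
  · simp only [circ_apply, fA0, fA1, fA2, fA3, fA4, fA5, fA6, fA7, fA8, fA9, fA10, fA11, fA12, fA13, fA14, fA15, fA16, fA17, fA18]; ring
  · simp only [circ_apply, fA0, fA1, fA2, fA3, fA4, fA5, fA6, fA7, fA8, fA9, fA10, fA11, fA12, fA13, fA14, fA15, fA16, fA17, fA18]; ring
  · simp only [circ_apply, fA0, fA1, fA2, fA3, fA4, fA5, fA6, fA7, fA8, fA9, fA10, fA11, fA12, fA13, fA14, fA15, fA16, fA17, fA18]; ring
  · simp only [circ_apply, fA0, fA1, fA2, fA3, fA4, fA5, fA6, fA7, fA8, fA9, fA10, fA11, fA12, fA13, fA14, fA15, fA16, fA17, fA18]; ring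
  · simp only [circ_apply, fA0, fA1, fA2, fA3, fA4, fA5, fA6, fA7, fA8, fA9, fA10, fA11, fA12, fA13, fA14, fA15, fA16, fA17, fA18]; ring
  · simp only [circ_apply, fA0, fA1, fA2, fA3, fA4, fA5, fA6, fA7, fA8, fA9, fA10, fA11, fA12, fA13, fA14, fA15, fA16, fA17, fA18]; ring
  · simp only [circ_apply, fA0, fA1, fA2, fA3, fA4, fA5, fA6, fA7, fA8, fA9, fA10, fA11, fA12, fA13, fA14, fA15, fA16, fA17, fA18]; ring
  · simp only [circ_apply, fA0, fA1, fA2, fA3, fA4, fA5, fA6, fA7, fA8, fA9, fA10, fA11, fA12, fA13, fA14, fA15, fA16, fA17, fA18]; ring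
  · simp only [circ_apply, fA0, fA1, fA2, fA3, fA4, fA5, fA6, fA7, fA8, fA9, fA10, fA11, fA12, fA13, fA14, fA15, fA16, fA17, fA18]; ring
  · simp only [circ_apply, fA0, fA1, fA2, fA3, fA4, fA5, fA6, fA7, fA8, fA9, fA10, fA11, fA12, fA13, fA14, fA15, fA16, fA17, fA18]; ring
  · simp only [circ_apply, fA0, fA1, fA2, fA3, fA4, fA5, fA6, fA7, fA8, fA9, fA10, fA11, fA12, fA13, fA14, fA15, fA16, fA17, fA18]; ring
  · simp only [circ_apply, fA0, fA1, fA2, fA3, fA4, fA5, fA6, fA7, fA8, fA9, fA10, fA11, fA12, fA13, fA14, fA15, fA16, fA17, fA18]; ring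
  · simp only [circ_apply, fA0, fA1, fA2, fA3, fA4, fA5, fA6, fA7, fA8, fA9, fA10, fA11, fA12, fA13, fA14, fA15, fA16, fA17, fA18]; ring
  · simp only [circ_apply, fA0, fA1, fA2, fA3, fA4, fA5, fA6, fA7, fA8, fA9, fA10, fA11, fA12, fA13, fA14, fA15, fA16, fA17, fA18]
    linear_combination
      (x 0 * y 1 * y 2 * z 3 + x 0 * y 1 * z 2 * z 3 + x 0 * y 1 * z 9 + x 0 * y 2 * y 3 * z 1 - x 0 * y 2 * z 8 + x 0 * y 3 * z 1 * z 2 + x 0 * y 3 * z 7 + x 0 * y 7 * z 3 - x 0 * y 8 * z 2 + x 0 * y 9 * z 1 + x 1 * y 0 * y 3 * z 2 - x 1 * y 0 * z 9 + x 1 * y 2 * z 0 * z 3 + x 1 * y 2 * z 6 - x 1 * y 3 * z 5 - x 1 * y 5 * z 3 + x 1 * y 6 * z 2 - x 1 * y 9 * z 0 + x 2 * y 0 * y 1 * z 3 + x 2 * y 0 * z 1 * z 3 + x 2 * y 0 * z 8 + x 2 * y 1 * y 3 * z 0 - x 2 * y 1 * z 6 + x 2 * y 3 * z 0 * z 1 +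 x 2 * y 3 * z 4 + x 2 * y 4 * z 3 - x 2 * y 6 * z 1 + x 2 * y 8 * z 0 + x 3 * y 0 * y 2 * z 1 - x 3 * y 0 * z 7 + x 3 * y 1 * z 0 * z 2 + x 3 * y 1 * z 5 - x 3 * y 2 * z 4 - x 3 * y 4 * z 2 + x 3 * y 5 * z 1 - x 3 * y 7 * z 0) * h3

end Aux

/-- Negative answer to Problem 2: `(M, ∘)` is a Moufang loop generated by
`{a, b, c, d}`, every triple of generators associates, yet `∘` is not associative. -/
theorem problem_two_counterexample :
    (∀ x y z : Fin 19 → ZMod 3,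
      circ (circ x y) (circ z x) = circ (circ x (circ y z)) x) ∧
    (∀ S : Set (Fin 19 → ZMod 3),
      (0 : Fin 19 → ZMod 3) ∈ S → a ∈ S → b ∈ S → c ∈ S → d ∈ S →
      (∀ x ∈ S, ∀ y ∈ S, circ x y ∈ S) →
      ∀ m : Fin 19 → ZMod 3, m ∈ S) ∧
    (circ (circ a b) c = circ a (circ b c) ∧
     circ (circ a b) d = circ a (circ b d) ∧
     circ (circ a c) d = circ a (circ c d) ∧
     circ (circ b c) d = circ b (circ c d)) ∧
    (∃ x y z : Fin 19 → ZMod 3, circ (circ x y) z ≠ circ x (circ y z)) := by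
  refine ⟨moufang, ?_, ⟨by decide, by decide, by decide, by decide⟩,
    ⟨a, b, circ c d, by decide⟩⟩
  intro S h0S haS hbS hcS hdS hcl m
  have hE : ∀ (i : Fin 19) (t : ZMod 3), t • e i ∈ S := by
    intro i t
    have ht : t = 0 ∨ t = 1 ∨ t = 2 := by revert t; decide
    have hi : i = 0 ∨ i = 1 ∨ i = 2 ∨ i = 3 ∨ i = 4 ∨ i = 5 ∨ i = 6 ∨ i = 7 ∨ i = 8 ∨ i = 9 ∨ i = 10 ∨ i = 11 ∨ i = 12 ∨ i = 13 ∨ i = 14 ∨ i = 15 ∨ i = 16 ∨ i = 17 ∨ i = 18 := by revert i; decide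
    rcases ht with rfl | rfl | rfl
    · simp only [zero_smul]; exact h0S
    · rcases hi with rfl | rfl | rfl | rfl | rfl | rfl | rfl | rfl | rfl | rfl | rfl | rfl | rfl | rfl | rfl | rfl | rfl | rfl | rfl
      · rw [show (1 : ZMod 3) • e 0 = a from by decide]; exact haS
      · rw [show (1 : ZMod 3) • e 1 = b from by decide]; exact hbS
      · rw [show (1 : ZMod 3) • e 2 = c from by decide]; exact hcS
      · rw [show (1 : ZMod 3) • e 3 = d from by decide]; exact hdS
      · rw [show (1 : ZMod 3) • e 4 = (circ (circ a a) (circ (circ b b) (circ a b))) from by decide]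
        exact (hcl _ (hcl _ haS _ haS) _ (hcl _ (hcl _ hbS _ hbS) _ (hcl _ haS _ hbS)))
      · rw [show (1 : ZMod 3) • e 5 = (circ (circ a a) (circ (circ c c) (circ a c))) from by decide]
        exact (hcl _ (hcl _ haS _ haS) _ (hcl _ (hcl _ hcS _ hcS) _ (hcl _ haS _ hcS)))
      · rw [show (1 : ZMod 3) • e 6 = (circ (circ a a) (circ (circ d d) (circ a d))) from by decide]
        exact (hcl _ (hcl _ haS _ haS) _ (hcl _ (hcl _ hdS _ hdS) _ (hcl _ haS _ hdS)))
      · rw [show (1 : ZMod 3) • e 7 = (circ (circ b b) (circ (circ c c) (circ b c))) from by decide]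
        exact (hcl _ (hcl _ hbS _ hbS) _ (hcl _ (hcl _ hcS _ hcS) _ (hcl _ hbS _ hcS)))
      · rw [show (1 : ZMod 3) • e 8 = (circ (circ b b) (circ (circ d d) (circ b d))) from by decide]
        exact (hcl _ (hcl _ hbS _ hbS) _ (hcl _ (hcl _ hdS _ hdS) _ (hcl _ hbS _ hdS)))
      · rw [show (1 : ZMod 3) • e 9 = (circ (circ c c) (circ (circ d d) (circ c d))) from by decide]
        exact (hcl _ (hcl _ hcS _ hcS) _ (hcl _ (hcl _ hdS _ hdS) _ (hcl _ hcS _ hdS)))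
      · rw [show (1 : ZMod 3) • e 10 = (circ (circ (circ a a) (circ b a)) (circ (circ (circ c b) (circ c a)) (circ (circ b a) (circ a c)))) from by decide]
        exact (hcl _ (hcl _ (hcl _ haS _ haS) _ (hcl _ hbS _ haS)) _ (hcl _ (hcl _ (hcl _ hcS _ hbS) _ (hcl _ hcS _ haS)) _ (hcl _ (hcl _ hbS _ haS) _ (hcl _ haS _ hcS))))
      · rw [show (1 : ZMod 3) • e 11 = (circ (circ (circ a a) (circ b a)) (circ (circ (circ d b) (circ d a)) (circ (circ b a) (circ a d)))) from by decide]
        exact (hcl _ (hcl _ (hcl _ haS _ haS) _ (hcl _ hbS _ haS)) _ (hcl _ (hcl _ (hcl _ hdS _ hbS) _ (hcl _ hdS _ haS)) _ (hcl _ (hcl _ hbS _ haS) _ (hcl _ haS _ hdS))))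
      · rw [show (1 : ZMod 3) • e 12 = (circ (circ (circ a a) (circ b a)) (circ (circ (circ a c) (circ a b)) (circ (circ c b) (circ a c)))) from by decide]
        exact (hcl _ (hcl _ (hcl _ haS _ haS) _ (hcl _ hbS _ haS)) _ (hcl _ (hcl _ (hcl _ haS _ hcS) _ (hcl _ haS _ hbS)) _ (hcl _ (hcl _ hcS _ hbS) _ (hcl _ haS _ hcS))))
      · rw [show (1 : ZMod 3) • e 13 = (circ (circ (circ a a) (circ c a)) (circ (circ (circ d c) (circ d a)) (circ (circ c a) (circ a d)))) from by decide]
        exact (hcl _ (hcl _ (hcl _ haS _ haS) _ (hcl _ hcS _ haS)) _ (hcl _ (hcl _ (hcl _ hdS _ hcS) _ (hcl _ hdS _ haS)) _ (hcl _ (hcl _ hcS _ haS) _ (hcl _ haS _ hdS))))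
      · rw [show (1 : ZMod 3) • e 14 = (circ (circ (circ a a) (circ b a)) (circ (circ (circ a d) (circ a b)) (circ (circ d b) (circ a d)))) from by decide]
        exact (hcl _ (hcl _ (hcl _ haS _ haS) _ (hcl _ hbS _ haS)) _ (hcl _ (hcl _ (hcl _ haS _ hdS) _ (hcl _ haS _ hbS)) _ (hcl _ (hcl _ hdS _ hbS) _ (hcl _ haS _ hdS))))
      · rw [show (1 : ZMod 3) • e 15 = (circ (circ (circ a a) (circ c a)) (circ (circ (circ a d) (circ a c)) (circ (circ d c) (circ a d)))) from by decide]
        exact (hcl _ (hcl _ (hcl _ haS _ haS) _ (hcl _ hcS _ haS)) _ (hcl _ (hcl _ (hcl _ haS _ hdS) _ (hcl _ haS _ hcS)) _ (hcl _ (hcl _ hdS _ hcS) _ (hcl _ haS _ hdS))))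
      · rw [show (1 : ZMod 3) • e 16 = (circ (circ (circ b b) (circ c b)) (circ (circ (circ d c) (circ d b)) (circ (circ c b) (circ b d)))) from by decide]
        exact (hcl _ (hcl _ (hcl _ hbS _ hbS) _ (hcl _ hcS _ hbS)) _ (hcl _ (hcl _ (hcl _ hdS _ hcS) _ (hcl _ hdS _ hbS)) _ (hcl _ (hcl _ hcS _ hbS) _ (hcl _ hbS _ hdS))))
      · rw [show (1 : ZMod 3) • e 17 = (circ (circ (circ b b) (circ c b)) (circ (circ (circ b d) (circ b c)) (circ (circ d c) (circ b d)))) from by decide]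
        exact (hcl _ (hcl _ (hcl _ hbS _ hbS) _ (hcl _ hcS _ hbS)) _ (hcl _ (hcl _ (hcl _ hbS _ hdS) _ (hcl _ hbS _ hcS)) _ (hcl _ (hcl _ hdS _ hcS) _ (hcl _ hbS _ hdS))))
      · rw [show (1 : ZMod 3) • e 18 = (circ (circ (circ a a) (circ b b)) (circ (circ (circ b c) (circ d d)) (circ (circ d c) (circ c a)))) from by decide]
        exact (hcl _ (hcl _ (hcl _ haS _ haS) _ (hcl _ hbS _ hbS)) _ (hcl _ (hcl _ (hcl _ hbS _ hcS) _ (hcl _ hdS _ hdS)) _ (hcl _ (hcl _ hdS _ hcS) _ (hcl _ hcS _ haS))))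
    · rcases hi with rfl | rfl | rfl | rfl | rfl | rfl | rfl | rfl | rfl | rfl | rfl | rfl | rfl | rfl | rfl | rfl | rfl | rfl | rfl
      · rw [show (2 : ZMod 3) • e 0 = (circ a a) from by decide]
        exact (hcl _ haS _ haS)
      · rw [show (2 : ZMod 3) • e 1 = (circ b b) from by decide]
        exact (hcl _ hbS _ hbS)
      · rw [show (2 : ZMod 3) • e 2 = (circ c c) from by decide]
        exact (hcl _ hcS _ hcS)
      · rw [show (2 : ZMod 3) • e 3 = (circ d d) from by decide]
        exact (hcl _ hdS _ hdS)
      · rw [show (2 : ZMod 3) • e 4 = (circ (circ a a) (circ (circ b a) (circ b b))) from by decide]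
        exact (hcl _ (hcl _ haS _ haS) _ (hcl _ (hcl _ hbS _ haS) _ (hcl _ hbS _ hbS)))
      · rw [show (2 : ZMod 3) • e 5 = (circ (circ a a) (circ (circ c a) (circ c c))) from by decide]
        exact (hcl _ (hcl _ haS _ haS) _ (hcl _ (hcl _ hcS _ haS) _ (hcl _ hcS _ hcS)))
      · rw [show (2 : ZMod 3) • e 6 = (circ (circ a a) (circ (circ d a) (circ d d))) from by decide]
        exact (hcl _ (hcl _ haS _ haS) _ (hcl _ (hcl _ hdS _ haS) _ (hcl _ hdS _ hdS)))
      · rw [show (2 : ZMod 3) • e 7 = (circ (circ b b) (circ (circ c b) (circ c c))) from by decide]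
        exact (hcl _ (hcl _ hbS _ hbS) _ (hcl _ (hcl _ hcS _ hbS) _ (hcl _ hcS _ hcS)))
      · rw [show (2 : ZMod 3) • e 8 = (circ (circ b b) (circ (circ d b) (circ d d))) from by decide]
        exact (hcl _ (hcl _ hbS _ hbS) _ (hcl _ (hcl _ hdS _ hbS) _ (hcl _ hdS _ hdS)))
      · rw [show (2 : ZMod 3) • e 9 = (circ (circ c c) (circ (circ d c) (circ d d))) from by decide]
        exact (hcl _ (hcl _ hcS _ hcS) _ (hcl _ (hcl _ hdS _ hcS) _ (hcl _ hdS _ hdS)))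
      · rw [show (2 : ZMod 3) • e 10 = (circ (circ (circ a a) (circ b a)) (circ (circ (circ c a) (circ b a)) (circ (circ a c) (circ b c)))) from by decide]
        exact (hcl _ (hcl _ (hcl _ haS _ haS) _ (hcl _ hbS _ haS)) _ (hcl _ (hcl _ (hcl _ hcS _ haS) _ (hcl _ hbS _ haS)) _ (hcl _ (hcl _ haS _ hcS) _ (hcl _ hbS _ hcS))))
      · rw [show (2 : ZMod 3) • e 11 = (circ (circ (circ a a) (circ b a)) (circ (circ (circ d a) (circ b a)) (circ (circ a d) (circ b d)))) from by decide]
        exact (hcl _ (hcl _ (hcl _ haS _ haS) _ (hcl _ hbS _ haS)) _ (hcl _ (hcl _ (hcl _ hdS _ haS) _ (hcl _ hbS _ haS)) _ (hcl _ (hcl _ haS _ hdS) _ (hcl _ hbS _ hdS))))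
      · rw [show (2 : ZMod 3) • e 12 = (circ (circ (circ a a) (circ c a)) (circ (circ (circ b a) (circ c a)) (circ (circ a b) (circ c b)))) from by decide]
        exact (hcl _ (hcl _ (hcl _ haS _ haS) _ (hcl _ hcS _ haS)) _ (hcl _ (hcl _ (hcl _ hbS _ haS) _ (hcl _ hcS _ haS)) _ (hcl _ (hcl _ haS _ hbS) _ (hcl _ hcS _ hbS))))
      · rw [show (2 : ZMod 3) • e 13 = (circ (circ (circ a a) (circ c a)) (circ (circ (circ d a) (circ c a)) (circ (circ a d) (circ c d)))) from by decide]
        exact (hcl _ (hcl _ (hcl _ haS _ haS) _ (hcl _ hcS _ haS)) _ (hcl _ (hcl _ (hcl _ hdS _ haS) _ (hcl _ hcS _ haS)) _ (hcl _ (hcl _ haS _ hdS) _ (hcl _ hcS _ hdS))))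
      · rw [show (2 : ZMod 3) • e 14 = (circ (circ (circ a a) (circ d a)) (circ (circ (circ b a) (circ d a)) (circ (circ a b) (circ d b)))) from by decide]
        exact (hcl _ (hcl _ (hcl _ haS _ haS) _ (hcl _ hdS _ haS)) _ (hcl _ (hcl _ (hcl _ hbS _ haS) _ (hcl _ hdS _ haS)) _ (hcl _ (hcl _ haS _ hbS) _ (hcl _ hdS _ hbS))))
      · rw [show (2 : ZMod 3) • e 15 = (circ (circ (circ a a) (circ d a)) (circ (circ (circ c a) (circ d a)) (circ (circ a c) (circ d c)))) from by decide]
        exact (hcl _ (hcl _ (hcl _ haS _ haS) _ (hcl _ hdS _ haS)) _ (hcl _ (hcl _ (hcl _ hcS _ haS) _ (hcl _ hdS _ haS)) _ (hcl _ (hcl _ haS _ hcS) _ (hcl _ hdS _ hcS))))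
      · rw [show (2 : ZMod 3) • e 16 = (circ (circ (circ b b) (circ c b)) (circ (circ (circ d b) (circ c b)) (circ (circ b d) (circ c d)))) from by decide]
        exact (hcl _ (hcl _ (hcl _ hbS _ hbS) _ (hcl _ hcS _ hbS)) _ (hcl _ (hcl _ (hcl _ hdS _ hbS) _ (hcl _ hcS _ hbS)) _ (hcl _ (hcl _ hbS _ hdS) _ (hcl _ hcS _ hdS))))
      · rw [show (2 : ZMod 3) • e 17 = (circ (circ (circ b b) (circ d b)) (circ (circ (circ c b) (circ d b)) (circ (circ b c) (circ d c)))) from by decide]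
        exact (hcl _ (hcl _ (hcl _ hbS _ hbS) _ (hcl _ hdS _ hbS)) _ (hcl _ (hcl _ (hcl _ hcS _ hbS) _ (hcl _ hdS _ hbS)) _ (hcl _ (hcl _ hbS _ hcS) _ (hcl _ hdS _ hcS))))
      · rw [show (2 : ZMod 3) • e 18 = (circ (circ (circ a a) (circ b b)) (circ (circ (circ b d) (circ c c)) (circ (circ c d) (circ d a)))) from by decide]
        exact (hcl _ (hcl _ (hcl _ haS _ haS) _ (hcl _ hbS _ hbS)) _ (hcl _ (hcl _ (hcl _ hbS _ hdS) _ (hcl _ hcS _ hcS)) _ (hcl _ (hcl _ hcS _ hdS) _ (hcl _ hdS _ haS))))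
  have htop : ∀ k : ℕ, k ≤ 9 → ∀ v : Fin 19 → ZMod 3,
      (∀ j : Fin 19, (j : ℕ) < 19 - k → v j = 0) → v ∈ S := by
    intro k
    induction k with
    | zero =>
      intro _ v hv
      have : v = 0 := funext fun j => hv j (by have := j.isLt; omega)
      rw [this]; exact h0S
    | succ k ih =>
      intro hk v hv
      have hn : 18 - k < 19 := by omega
      have hq : ∀ j : Fin 19, (j : ℕ) ≠ 18 - k →
          (v ⟨18 - k, hn⟩ • e ⟨18 - k, hn⟩) j = 0 := by
        intro j hne
        rw [Pi.smul_apply, e_ne _ _ (Fin.ne_of_val_ne hne), smul_zero]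
      have hp : ∀ j : Fin 19, (j : ℕ) < 19 - k →
          (v - v ⟨18 - k, hn⟩ • e ⟨18 - k, hn⟩) j = 0 := by
        intro j hj
        rw [Pi.sub_apply]
        by_cases hc : (j : ℕ) = 18 - k
        · have hjeq : j = ⟨18 - k, hn⟩ := Fin.ext hc
          rw [hjeq, Pi.smul_apply, e_self, smul_eq_mul, mul_one, sub_self]
        · rw [hv j (by omega), hq j hc, sub_zero]
      have hpS := ih (by omega) _ hp
      have hcirc : circ (v - v ⟨18 - k, hn⟩ • e ⟨18 - k, hn⟩)
          (v ⟨18 - k, hn⟩ • e ⟨18 - k, hn⟩) = v := by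
        rw [f_top _ _ (fun j hj => hq j (by omega))]; abel
      rw [← hcirc]
      exact hcl _ hpS _ (hE _ _)
  -- step 1: match coordinates 0..3
  have hw1S : (circ (circ (circ (m 0 • a) (m 1 • b)) (m 2 • c)) (m 3 • d)) ∈ S :=
    hcl _ (hcl _ (hcl _ (hE 0 (m 0)) _ (hE 1 (m 1))) _ (hE 2 (m 2))) _ (hE 3 (m 3))
  have hA0 : (circ (circ (circ (m 0 • a) (m 1 • b)) (m 2 • c)) (m 3 • d)) 0 = m 0 := by
    rw [f_low _ _ 0 (by decide), f_low _ _ 0 (by decide), f_low _ _ 0 (by decide)]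
    simp [Pi.smul_apply, show a 0 = (1 : ZMod 3) from rfl, show b 0 = (0 : ZMod 3) from rfl, show c 0 = (0 : ZMod 3) from rfl, show d 0 = (0 : ZMod 3) from rfl]
  have hA1 : (circ (circ (circ (m 0 • a) (m 1 • b)) (m 2 • c)) (m 3 • d)) 1 = m 1 := by
    rw [f_low _ _ 1 (by decide), f_low _ _ 1 (by decide), f_low _ _ 1 (by decide)]
    simp [Pi.smul_apply, show a 1 = (0 : ZMod 3) from rfl, show b 1 = (1 : ZMod 3) from rfl, show c 1 = (0 : ZMod 3) from rfl, show d 1 = (0 : ZMod 3) from rfl]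
  have hA2 : (circ (circ (circ (m 0 • a) (m 1 • b)) (m 2 • c)) (m 3 • d)) 2 = m 2 := by
    rw [f_low _ _ 2 (by decide), f_low _ _ 2 (by decide), f_low _ _ 2 (by decide)]
    simp [Pi.smul_apply, show a 2 = (0 : ZMod 3) from rfl, show b 2 = (0 : ZMod 3) from rfl, show c 2 = (1 : ZMod 3) from rfl, show d 2 = (0 : ZMod 3) from rfl]
  have hA3 : (circ (circ (circ (m 0 • a) (m 1 • b)) (m 2 • c)) (m 3 • d)) 3 = m 3 := by
    rw [f_low _ _ 3 (by decide), f_low _ _ 3 (by decide), f_low _ _ 3 (by decide)]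
    simp [Pi.smul_apply, show a 3 = (0 : ZMod 3) from rfl, show b 3 = (0 : ZMod 3) from rfl, show c 3 = (0 : ZMod 3) from rfl, show d 3 = (1 : ZMod 3) from rfl]
  have hagree4 : ∀ j : Fin 19, (j : ℕ) < 4 → (circ (circ (circ (m 0 • a) (m 1 • b)) (m 2 • c)) (m 3 • d)) j = m j := by
    intro j hj
    obtain ⟨jv, hjv⟩ := j
    interval_cases jv
    exacts [hA0, hA1, hA2, hA3]
  have hmid : ∀ k : ℕ, k ≤ 6 →
      ∃ w, w ∈ S ∧ ∀ j : Fin 19, (j : ℕ) < 4 + k → w j = m j := by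
    intro k
    induction k with
    | zero => exact fun _ => ⟨_, hw1S, hagree4⟩
    | succ k ih =>
      intro hk
      obtain ⟨w, hwS, hw⟩ := ih (by omega)
      have hn : 4 + k < 19 := by omega
      refine ⟨circ w ((m ⟨4 + k, hn⟩ - w ⟨4 + k, hn⟩) • e ⟨4 + k, hn⟩),
        hcl _ hwS _ (hE _ _), ?_⟩
      have hy4 : ∀ j : Fin 19, (j : ℕ) < 4 →
          ((m ⟨4 + k, hn⟩ - w ⟨4 + k, hn⟩) • e ⟨4 + k, hn⟩) j = 0 := by
        intro j hj
        rw [Pi.smul_apply, e_ne _ _ (Fin.ne_of_val_ne (show (j : ℕ) ≠ 4 + k by omega)), smul_zero]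
      intro j hj
      rw [f_mid w _ hy4 j (by omega)]
      by_cases hc : (j : ℕ) = 4 + k
      · have hjeq : j = ⟨4 + k, hn⟩ := Fin.ext hc
        rw [hjeq, Pi.smul_apply, e_self, smul_eq_mul, mul_one]
        ring
      · rw [Pi.smul_apply, e_ne _ _ (Fin.ne_of_val_ne hc), smul_zero, add_zero]
        exact hw j (by omega)
  obtain ⟨w, hwS, hw⟩ := hmid 6 le_rfl
  have hv : ∀ j : Fin 19, (j : ℕ) < 10 → (m - w) j = 0 := by
    intro j hj
    rw [Pi.sub_apply, hw j (by omega), sub_self]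
  have hvS : (m - w) ∈ S := htop 9 (by omega) _ (fun j hj => hv j (by omega))
  have hfin : circ w (m - w) = m := by rw [f_top _ _ hv]; abel
  rw [← hfin]
  exact hcl _ hwS _ hvS
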